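/- arXiv:math/9605204 — 3 statements merged into one kernel-verified Lean document; each statement's English description precedes it below -/
import Mathlib

section
/- Every subring of the rational numbers ℚ (containing 1) is of the form ℚ_π, the subring generated by the set {1/p : p ∈ π} for some set π of primes. -/
/-! Take `π` to be the primes `p` with `1/p ∈ C`. If `a/b ∈ C` in lowest terms, a Bézout
relation `u a + v b = 1` gives `1/b = u (a/b) + v ∈ C`; and if `1/(mn) ∈ C` then
`1/m = n/(mn) ∈ C`, so `1/b` is a product of inverses of primes in `π`. -/

theorem Rat.inv_den_mem {S : Subring ℚ} {x : ℚ} (hx : x ∈ S) : (x.den : ℚ)⁻¹ ∈ S := by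
  obtain ⟨u, v, huv⟩ := x.isCoprime_num_den
  have key : (x.den : ℚ)⁻¹ = u * x + v := by
    refine (eq_inv_of_mul_eq_one_left ?_).symm
    rw [add_mul, mul_assoc, Rat.mul_den_eq_num]
    exact_mod_cast huv
  rw [key]
  exact add_mem (mul_mem (intCast_mem S u) hx) (intCast_mem S v)

section

variable {K : Type*} [Field K]

theorem Subring.inv_mem_of_inv_mul_mem {S : Subring K} {x y : K} (hy : y ≠ 0) (hyS : y ∈ S)
    (hxy : (x * y)⁻¹ ∈ S) : x⁻¹ ∈ S := by
  have : x⁻¹ = y * (x * y)⁻¹ := by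
    rw [mul_inv, mul_left_comm, mul_inv_cancel₀ hy, mul_one]
  exact this ▸ mul_mem hyS hxy

theorem Subring.inv_natCast_mem_closure [CharZero K] {S : Subring K} {π : Set ℕ}
    (hπ : ∀ p : ℕ, p.Prime → (p : K)⁻¹ ∈ S → p ∈ π) {n : ℕ} (hn : n ≠ 0)
    (hnS : (n : K)⁻¹ ∈ S) :
    (n : K)⁻¹ ∈ Subring.closure {x : K | ∃ p ∈ π, x = (p : K)⁻¹} := by
  induction n using Nat.recOnMul with
  | zero => exact absurd rfl hn
  | one => simp [one_mem]
  | prime p hp => exact Subring.subset_closure ⟨p, hπ p hp hnS, rfl⟩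
  | mul a b iha ihb =>
    obtain ⟨ha, hb⟩ := mul_ne_zero_iff.mp hn
    rw [Nat.cast_mul] at hnS ⊢
    have haS : (a : K)⁻¹ ∈ S :=
      inv_mem_of_inv_mul_mem (Nat.cast_ne_zero.mpr hb) (natCast_mem S b) hnS
    have hbS : (b : K)⁻¹ ∈ S :=
      inv_mem_of_inv_mul_mem (Nat.cast_ne_zero.mpr ha) (natCast_mem S a)
        (mul_comm (a : K) b ▸ hnS)
    rw [mul_inv]
    exact mul_mem (iha ha haS) (ihb hb hbS)

end

/-- Every subring of ℚ is of the form ℚ_π: the subring generated by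
`{1/p : p ∈ π}` for some set `π` of primes. -/
theorem every_subring_of_rat_eq_Qpi (C : Subring ℚ) :
    ∃ π : Set ℕ, (∀ p ∈ π, Nat.Prime p) ∧
      C = Subring.closure {x : ℚ | ∃ p ∈ π, x = ((p : ℚ))⁻¹} := by
  refine ⟨{p : ℕ | p.Prime ∧ (p : ℚ)⁻¹ ∈ C}, fun p hp => hp.1,
    le_antisymm (fun x hx => ?_) (Subring.closure_le.mpr ?_)⟩
  · have hden := Subring.inv_natCast_mem_closure
      (π := {p : ℕ | p.Prime ∧ (p : ℚ)⁻¹ ∈ C}) (fun p hp hpC => ⟨hp, hpC⟩) x.den_nz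
      (Rat.inv_den_mem hx)
    rw [← Rat.num_div_den x, div_eq_mul_inv]
    exact mul_mem (intCast_mem _ _) hden
  · rintro _ ⟨p, hp, rfl⟩
    exact hp.2
end

section
/- A subring ℚ_π of ℚ is recursive (i.e. membership of rational numbers in it is decidable) if and only if the set of primes π is recursive (decidable). -/
open Encodable Denumerable

namespace QpiAux

/-! ### A counting scheme and its computability -/

/-- count of `m < n` with `p m = true` -/
def cntP (p : ℕ → Bool) : ℕ → ℕ
  | 0 => 0
  | n + 1 => cntP p n + (bif p n then 1 else 0)

lemma cntP_eq_zero_iff {p : ℕ → Bool} {n : ℕ} :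
    cntP p n = 0 ↔ ∀ m < n, p m = false := by
  induction n with
  | zero => simp [cntP]
  | succ n ih =>
    simp only [cntP, Nat.add_eq_zero, ih]
    constructor
    · rintro ⟨h1, h2⟩ m hm
      rcases Nat.lt_succ_iff_lt_or_eq.1 hm with hm | rfl
      · exact h1 m hm
      · cases h : p m <;> simp [h] at h2 ⊢
    · intro h
      refine ⟨fun m hm => h m (hm.trans (Nat.lt_succ_self n)), ?_⟩
      simp [h n (Nat.lt_succ_self n)]

lemma cntP_mono {p : ℕ → Bool} : Monotone (cntP p) := by
  apply monotone_nat_of_le_succ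
  intro n; cases h : p n <;> simp [cntP, h]

lemma cntP_lt {p : ℕ → Bool} {m m' : ℕ} (h : m < m') (hm : p m = true) :
    cntP p m < cntP p m' := by
  have : cntP p m < cntP p (m + 1) := by simp [cntP, hm]
  exact lt_of_lt_of_le this (cntP_mono h)

lemma cntP_congr {p p' : ℕ → Bool} (h : ∀ m, p m = p' m) (n : ℕ) :
    cntP p n = cntP p' n := by
  induction n with
  | zero => rfl
  | succ n ih => simp [cntP, ih, h n]

lemma countP_range_eq_cntP (p : ℕ → Bool) (n : ℕ) :
    (List.range n).countP p = cntP p n := by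
  induction n with
  | zero => simp [cntP]
  | succ n ih =>
    rw [List.range_succ, List.countP_append, ih]
    cases h : p n <;> simp [cntP, h, List.countP_cons]

/-- computability of the counting scheme -/
lemma computable_cntP {α : Type} [Primcodable α] {p : α → ℕ → Bool}
    (hp : Computable₂ p) {f : α → ℕ} (hf : Computable f) :
    Computable fun a => cntP (p a) (f a) := by
  have hcond : Computable fun pr : α × ℕ × ℕ => ((bif p pr.1 pr.2.1 then 1 else 0) : ℕ) :=
    Computable.cond (hp.comp Computable.fst (Computable.fst.comp Computable.snd))
      (Computable.const 1) (Computable.const 0)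
  have hadd : Computable fun pr : α × ℕ × ℕ =>
      pr.2.2 + (bif p pr.1 pr.2.1 then 1 else 0) :=
    (Primrec.nat_add.to_comp).comp (Computable.snd.comp Computable.snd) hcond
  have key : ∀ (a : α) (n : ℕ),
      (Nat.rec 0 (fun n ih => ih + (bif p a n then 1 else 0)) n : ℕ) = cntP (p a) n := by
    intro a n
    induction n with
    | zero => rfl
    | succ n ih => simp only [cntP, ← ih]
  have h := Computable.nat_rec hf (Computable.const 0)
    (Computable₂.mk (f := fun (a : α) (x : ℕ × ℕ) => x.2 + (bif p a x.1 then 1 else 0)) hadd)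
  exact h.of_eq fun a => key a (f a)

/-! ### Decoding integers -/

/-- natAbs of the integer with code `a` -/
def J (a : ℕ) : ℕ := if a % 2 = 0 then a / 2 else a / 2 + 1

lemma J_encode (z : ℤ) : J (@Encodable.encode ℤ Int.encodable z) = z.natAbs := by
  have : @Encodable.encode ℤ Int.encodable z = Equiv.intEquivNat z := rfl
  rw [this]
  cases z with
  | ofNat n =>
    have : Equiv.intEquivNat (Int.ofNat n) = 2 * n := by rfl
    rw [this]; simp [J, Nat.mul_div_cancel_left, Nat.mul_mod_right]
  | negSucc n =>
    have : Equiv.intEquivNat (Int.negSucc n) = 2 * n + 1 := by rfl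
    rw [this]
    have h1 : (2 * n + 1) % 2 = 1 := by omega
    have h2 : (2 * n + 1) / 2 = n := by omega
    simp [J, h1, h2]

lemma J_symm (a : ℕ) : (Equiv.intEquivNat.symm a).natAbs = J a := by
  have := J_encode (Equiv.intEquivNat.symm a)
  have h2 : @Encodable.encode ℤ Int.encodable (Equiv.intEquivNat.symm a)
      = Equiv.intEquivNat (Equiv.intEquivNat.symm a) := rfl
  rw [h2, Equiv.apply_symm_apply] at this
  exact this.symm

lemma primrec_J : Primrec J :=
  Primrec.ite (Primrec.eq.comp (Primrec.nat_mod.comp .id (.const 2)) (.const 0))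
    (Primrec.nat_div.comp .id (.const 2))
    (Primrec.succ.comp (Primrec.nat_div.comp .id (.const 2)))

/-! ### The codes of rationals -/

/-- common divisor test -/
def cdB (x b d : ℕ) : Bool := decide (2 ≤ d ∧ x % d = 0 ∧ b % d = 0)

/-- whether `k` is a valid (sigma-)code of a rational -/
def validB (k : ℕ) : Bool :=
  decide (0 < (Nat.unpair k).2) &&
    (cntP (cdB (J (Nat.unpair k).1) (Nat.unpair k).2) ((Nat.unpair k).2 + 1) == 0)

lemma coprime_iff {x b : ℕ} (hb : 0 < b) :
    Nat.Coprime x b ↔ ∀ d, 2 ≤ d → ¬(d ∣ x ∧ d ∣ b) := by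
  constructor
  · intro h d hd ⟨hdx, hdb⟩
    have : d ∣ Nat.gcd x b := Nat.dvd_gcd hdx hdb
    rw [h] at this
    have := Nat.le_of_dvd one_pos this
    omega
  · intro h
    by_contra hne
    have hg0 : Nat.gcd x b ≠ 0 := fun h0 => by
      have := Nat.eq_zero_of_gcd_eq_zero_right h0; omega
    have hg : 2 ≤ Nat.gcd x b := by
      rcases Nat.lt_or_ge (Nat.gcd x b) 2 with h2 | h2
      · exfalso; have : Nat.gcd x b = 1 := by omega
        exact hne this
      · exact h2
    exact h _ hg ⟨Nat.gcd_dvd_left _ _, Nat.gcd_dvd_right _ _⟩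

lemma validB_iff (k : ℕ) :
    validB k = true ↔ 0 < (Nat.unpair k).2 ∧
      Nat.Coprime (J (Nat.unpair k).1) (Nat.unpair k).2 := by
  set x := J (Nat.unpair k).1
  set b := (Nat.unpair k).2
  simp only [validB, Bool.and_eq_true, decide_eq_true_iff, beq_iff_eq]
  constructor
  · rintro ⟨hb, hc⟩
    refine ⟨hb, (coprime_iff hb).2 fun d hd ⟨hdx, hdb⟩ => ?_⟩
    have hdlt : d < b + 1 := Nat.lt_succ_of_le (Nat.le_of_dvd hb hdb)
    have := cntP_eq_zero_iff.1 hc d hdlt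
    simp only [cdB, decide_eq_false_iff_not, not_and] at this
    exact this hd (Nat.eq_zero_of_dvd_of_lt hdx |> fun _ => Nat.mod_eq_zero_of_dvd hdx)
      (Nat.mod_eq_zero_of_dvd hdb)
  · rintro ⟨hb, hc⟩
    refine ⟨hb, cntP_eq_zero_iff.2 fun d _ => ?_⟩
    have := (coprime_iff hb).1 hc d
    simp only [cdB, decide_eq_false_iff_not]
    rintro ⟨hd, hdx, hdb⟩
    exact this hd ⟨Nat.dvd_of_mod_eq_zero hdx, Nat.dvd_of_mod_eq_zero hdb⟩

lemma computable_cd : Computable₂ (fun k d : ℕ =>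
    cdB (J (Nat.unpair k).1) (Nat.unpair k).2 d) := by
  have h1 : Primrec fun p : ℕ × ℕ => J (Nat.unpair p.1).1 :=
    primrec_J.comp ((Primrec.fst.comp Primrec.unpair).comp Primrec.fst)
  have h2 : Primrec fun p : ℕ × ℕ => (Nat.unpair p.1).2 :=
    (Primrec.snd.comp Primrec.unpair).comp Primrec.fst
  have : Primrec fun p : ℕ × ℕ => cdB (J (Nat.unpair p.1).1) (Nat.unpair p.1).2 p.2 := by
    unfold cdB
    have e1 : PrimrecPred fun p : ℕ × ℕ => 2 ≤ p.2 :=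
      Primrec.nat_le.comp (Primrec.const 2) Primrec.snd
    have e2 : PrimrecPred fun p : ℕ × ℕ => J (Nat.unpair p.1).1 % p.2 = 0 :=
      Primrec.eq.comp (Primrec.nat_mod.comp h1 Primrec.snd) (Primrec.const 0)
    have e3 : PrimrecPred fun p : ℕ × ℕ => (Nat.unpair p.1).2 % p.2 = 0 :=
      Primrec.eq.comp (Primrec.nat_mod.comp h2 Primrec.snd) (Primrec.const 0)
    exact Primrec.of_eq (e1.and (e2.and e3)).decide fun p => decide_eq_decide.mpr Iff.rfl
  exact this.to_comp

lemma computable_validB : Computable validB := by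
  have hcnt : Computable fun k =>
      cntP (cdB (J (Nat.unpair k).1) (Nat.unpair k).2) ((Nat.unpair k).2 + 1) :=
    computable_cntP computable_cd
      (Primrec.succ.comp (Primrec.snd.comp Primrec.unpair)).to_comp
  have h0 : Computable fun k : ℕ => decide (0 < (Nat.unpair k).2) :=
    (Primrec.nat_lt.comp (Primrec.const 0) (Primrec.snd.comp Primrec.unpair)).decide.to_comp
  have hbeq : Computable fun k =>
      (cntP (cdB (J (Nat.unpair k).1) (Nat.unpair k).2) ((Nat.unpair k).2 + 1) == 0) :=
    (Primrec.beq.to_comp).comp hcnt (Computable.const 0)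
  exact ((Primrec.and.to_comp).comp h0 hbeq).of_eq fun k => rfl

/-! ### The encoding of ℚ -/

abbrev QPC : Primcodable ℚ := Primcodable.ofDenumerable ℚ
abbrev QEd : Encodable ℚ := QPC.toEncodable
abbrev Eenc : ℚ → ℕ := @Encodable.encode ℚ Rat.instEncodable

def Esig (q : ℚ) : ℕ := Nat.pair (@Encodable.encode ℤ Int.encodable q.num) q.den

lemma Eenc_eq (q : ℚ) : Eenc q = Esig q := rfl

lemma encode_denum_eq (q : ℚ) :
    @Encodable.encode ℚ QEd q =
      ((List.range (Esig q)).countP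
        fun k => @decide (k ∈ Set.range Eenc) (Encodable.decidableRangeEncode ℚ k)) := rfl

lemma mem_range_iff (k : ℕ) :
    k ∈ Set.range Eenc ↔
      0 < (Nat.unpair k).2 ∧
        Nat.Coprime ((Equiv.intEquivNat.symm (Nat.unpair k).1).natAbs) (Nat.unpair k).2 := by
  constructor
  · rintro ⟨q, rfl⟩
    rw [Eenc_eq]
    simp only [Esig, Nat.unpair_pair]
    have henc : @Encodable.encode ℤ Int.encodable q.num = Equiv.intEquivNat q.num := rfl
    rw [henc, Equiv.symm_apply_apply]
    exact ⟨q.pos, q.reduced⟩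
  · rintro ⟨hb, hc⟩
    refine ⟨⟨Equiv.intEquivNat.symm (Nat.unpair k).1, (Nat.unpair k).2, hb.ne', hc⟩, ?_⟩
    rw [Eenc_eq]
    show Nat.pair (@Encodable.encode ℤ Int.encodable (Equiv.intEquivNat.symm (Nat.unpair k).1))
      (Nat.unpair k).2 = k
    have henc : @Encodable.encode ℤ Int.encodable (Equiv.intEquivNat.symm (Nat.unpair k).1)
        = Equiv.intEquivNat (Equiv.intEquivNat.symm (Nat.unpair k).1) := rfl
    rw [henc, Equiv.apply_symm_apply, Nat.pair_unpair]

lemma validB_eq_mem (k : ℕ) :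
    (@decide (k ∈ Set.range Eenc) (Encodable.decidableRangeEncode ℚ k)) = validB k := by
  rw [Bool.eq_iff_iff, @decide_eq_true_iff _ (Encodable.decidableRangeEncode ℚ k), validB_iff]
  have h := mem_range_iff k
  rw [J_symm] at h
  exact h

lemma validB_Esig (q : ℚ) : validB (Esig q) = true := by
  rw [← validB_eq_mem, @decide_eq_true_iff _ (Encodable.decidableRangeEncode ℚ (Esig q))]
  exact ⟨q, Eenc_eq q⟩

/-- The key bridge: the (denumerable) encoding of a rational is the number of valid codes
below its sigma-code. -/
lemma encodeQ_eq (q : ℚ) : @Encodable.encode ℚ QEd q = cntP validB (Esig q) := by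
  rw [encode_denum_eq, countP_range_eq_cntP]
  exact cntP_congr validB_eq_mem _

lemma Esig_unique {q : ℚ} {m : ℕ} (hm : validB m = true)
    (hc : cntP validB m = @Encodable.encode ℚ QEd q) : m = Esig q := by
  rcases lt_trichotomy m (Esig q) with h | h | h
  · exfalso
    have := cntP_lt h hm
    rw [hc, encodeQ_eq] at this
    exact lt_irrefl _ this
  · exact h
  · exfalso
    have := cntP_lt h (validB_Esig q)
    rw [hc, encodeQ_eq] at this
    exact lt_irrefl _ this

lemma computable_Esig : Computable Esig := by
  have hc : Computable₂ fun (q : ℚ) (m : ℕ) =>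
      (validB m && (cntP validB m == @Encodable.encode ℚ QEd q)) := by
    have h1 : Computable fun x : ℚ × ℕ => validB x.2 :=
      computable_validB.comp Computable.snd
    have h2 : Computable fun x : ℚ × ℕ => cntP validB x.2 :=
      (computable_cntP (α := ℚ × ℕ)
        ((computable_validB.comp Computable.snd).to₂) Computable.snd).of_eq
        (fun x => rfl)
    have h3 : Computable fun x : ℚ × ℕ => @Encodable.encode ℚ QEd x.1 :=
      Computable.encode.comp Computable.fst
    exact Computable₂.mk (((Primrec.and.to_comp)).comp h1
      ((Primrec.beq.to_comp).comp h2 h3))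
  have hp : Partrec₂ fun (q : ℚ) => ((fun m =>
      (validB m && (cntP validB m == @Encodable.encode ℚ QEd q))) : ℕ →. Bool) :=
    hc.partrec₂
  have hr := Partrec.rfind hp
  apply hr.of_eq_tot
  intro q
  refine Nat.mem_rfind.2 ?_
  constructor
  · apply Part.mem_some_iff.2
    symm
    rw [Bool.and_eq_true, beq_iff_eq]
    exact ⟨validB_Esig q, (encodeQ_eq q).symm⟩
  · intro m hm
    apply Part.mem_some_iff.2
    symm
    rw [Bool.and_eq_false_iff]
    by_contra hcon
    push_neg at hcon
    obtain ⟨hv, hb⟩ := hcon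
    rw [Bool.ne_false_iff] at hv hb
    rw [beq_iff_eq] at hb
    exact absurd (Esig_unique hv hb) (Nat.ne_of_lt hm)

lemma computable_den : Computable (fun q : ℚ => q.den) := by
  have := (Computable.snd.comp (Computable.unpair.comp computable_Esig))
  exact this.of_eq fun q => by simp [Esig, Nat.unpair_pair]

/-! ### Primality test -/

def isPrB (p : ℕ) : Bool :=
  decide (2 ≤ p) && (cntP (fun d => decide (p % d = 0 ∧ d ≠ 1)) p == 0)

lemma isPrB_iff (p : ℕ) : isPrB p = true ↔ p.Prime := by
  rw [Nat.prime_def_lt]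
  simp only [isPrB, Bool.and_eq_true, decide_eq_true_iff, beq_iff_eq, cntP_eq_zero_iff]
  constructor
  · rintro ⟨h2, h⟩
    refine ⟨h2, fun m hm hmd => ?_⟩
    have := h m hm
    simp only [decide_eq_false_iff_not, not_and, ne_eq, not_not] at this
    exact this (Nat.mod_eq_zero_of_dvd hmd)
  · rintro ⟨h2, h⟩
    refine ⟨h2, fun m hm => ?_⟩
    simp only [decide_eq_false_iff_not, not_and, ne_eq, not_not]
    intro hmod
    rcases Nat.eq_zero_or_pos m with rfl | hm0
    · exfalso; rw [Nat.mod_zero] at hmod; omega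
    · exact h m hm (Nat.dvd_of_mod_eq_zero hmod)

lemma computable_isPrB : Computable isPrB := by
  have hcnt : Computable fun p : ℕ => cntP (fun d => decide (p % d = 0 ∧ d ≠ 1)) p := by
    apply computable_cntP _ Computable.id
    have e1 : PrimrecPred fun x : ℕ × ℕ => x.1 % x.2 = 0 :=
      Primrec.eq.comp (Primrec.nat_mod.comp Primrec.fst Primrec.snd) (Primrec.const 0)
    have e2 : PrimrecPred fun x : ℕ × ℕ => x.2 ≠ 1 :=
      (Primrec.eq.comp Primrec.snd (Primrec.const 1)).not
    exact Computable₂.mk ((Primrec.of_eq (e1.and e2).decide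
      fun x => decide_eq_decide.mpr Iff.rfl).to_comp)
  have h2 : Computable fun p : ℕ => decide (2 ≤ p) :=
    (Primrec.nat_le.comp (Primrec.const 2) Primrec.id).decide.to_comp
  exact ((Primrec.and.to_comp).comp h2
    ((Primrec.beq.to_comp).comp hcnt (Computable.const 0))).of_eq fun p => rfl

/-! ### The subring characterization -/

/-- the subring of rationals whose denominator has all prime factors in π -/
def W (π : Set ℕ) : Subring ℚ where
  carrier := {q : ℚ | ∀ r : ℕ, r.Prime → r ∣ q.den → r ∈ π}
  zero_mem' := by intro r hr h; simp at h; exact absurd h hr.one_lt.ne'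
  one_mem' := by intro r hr h; simp at h; exact absurd h hr.one_lt.ne'
  add_mem' := by
    intro a b ha hb r hr hd
    rcases (Nat.Prime.dvd_mul hr).1 (hd.trans (Rat.add_den_dvd a b)) with h | h
    · exact ha r hr h
    · exact hb r hr h
  mul_mem' := by
    intro a b ha hb r hr hd
    rcases (Nat.Prime.dvd_mul hr).1 (hd.trans (Rat.mul_den_dvd a b)) with h | h
    · exact ha r hr h
    · exact hb r hr h
  neg_mem' := by intro a ha r hr hd; rw [Rat.neg_den] at hd; exact ha r hr hd

lemma inv_den_mem (π : Set ℕ) :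
    ∀ n : ℕ, 0 < n → (∀ r : ℕ, r.Prime → r ∣ n → r ∈ π) →
      ((n : ℚ))⁻¹ ∈ Subring.closure {x : ℚ | ∃ p ∈ π, x = ((p : ℚ))⁻¹} := by
  intro n
  induction n using Nat.strong_induction_on with
  | _ n ih =>
    intro hn hdiv
    rcases eq_or_lt_of_le (show 1 ≤ n from hn) with h1 | h2
    · rw [← h1]; simpa using Subring.one_mem _
    · have hn1 : n ≠ 1 := by omega
      have hp := Nat.minFac_prime hn1
      set p := n.minFac with hp_def
      have hpd : p ∣ n := Nat.minFac_dvd n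
      have hpπ : p ∈ π := hdiv p hp hpd
      obtain ⟨m, hm⟩ := hpd
      have hm0 : 0 < m := by
        rcases Nat.eq_zero_or_pos m with h | h
        · subst h; simp at hm; omega
        · exact h
      have hmlt : m < n := by
        have := hp.two_le
        calc m < p * m := by nlinarith
        _ = n := hm.symm
      have hmem : ((m : ℚ))⁻¹ ∈ _ :=
        ih m hmlt hm0 (fun r hr hrd => hdiv r hr (hrd.trans ⟨p, by rw [hm, Nat.mul_comm]⟩))
      have hpmem : ((p : ℚ))⁻¹ ∈ Subring.closure {x : ℚ | ∃ p ∈ π, x = ((p : ℚ))⁻¹} :=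
        Subring.subset_closure ⟨p, hpπ, rfl⟩
      have : ((n : ℚ))⁻¹ = ((p : ℚ))⁻¹ * ((m : ℚ))⁻¹ := by
        rw [hm]; push_cast; rw [mul_inv]
      rw [this]
      exact Subring.mul_mem _ hpmem hmem

lemma mem_closure_iff (π : Set ℕ) (hπ : ∀ p ∈ π, Nat.Prime p) (q : ℚ) :
    q ∈ Subring.closure {x : ℚ | ∃ p ∈ π, x = ((p : ℚ))⁻¹} ↔
      ∀ r : ℕ, r.Prime → r ∣ q.den → r ∈ π := by
  constructor
  · intro hq
    have : Subring.closure {x : ℚ | ∃ p ∈ π, x = ((p : ℚ))⁻¹} ≤ W π := by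
      rw [Subring.closure_le]
      rintro x ⟨p, hp, rfl⟩
      intro r hr hrd
      have hppr := hπ p hp
      rw [Rat.inv_natCast_den_of_pos hppr.pos] at hrd
      rcases (Nat.Prime.eq_one_or_self_of_dvd hppr r hrd) with h | h
      · exact absurd h hr.one_lt.ne'
      · rwa [h]
    exact this hq
  · intro h
    have hden : ((q.den : ℚ))⁻¹ ∈ Subring.closure {x : ℚ | ∃ p ∈ π, x = ((p : ℚ))⁻¹} :=
      inv_den_mem π q.den q.pos h
    have hnum : ((q.num : ℚ)) ∈ Subring.closure {x : ℚ | ∃ p ∈ π, x = ((p : ℚ))⁻¹} :=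
      intCast_mem _ q.num
    have : q = (q.num : ℚ) * ((q.den : ℚ))⁻¹ := by
      rw [← div_eq_mul_inv, Rat.num_div_den]
    rw [this]
    exact Subring.mul_mem _ hnum hden

end QpiAux

open QpiAux

/-- The subring ℚ_π of ℚ generated by `{1/p : p ∈ π}` is recursive
(membership of rationals is computably decidable) if and only if the set
of primes `π` is recursive. -/
theorem Qpi_recursive_iff_pi_recursive (π : Set ℕ) (hπ : ∀ p ∈ π, Nat.Prime p) :
    (∃ f : ℚ → Bool, Computable f ∧
       ∀ q : ℚ, f q = true ↔ q ∈ Subring.closure {x : ℚ | ∃ p ∈ π, x = ((p : ℚ))⁻¹}) ↔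
    (∃ g : ℕ → Bool, Computable g ∧ ∀ p : ℕ, g p = true ↔ p ∈ π) := by
  constructor
  · rintro ⟨f, hf, hfspec⟩
    refine ⟨fun p => isPrB p && f (Denumerable.ofNat ℚ (cntP validB (Nat.pair 2 p))), ?_, ?_⟩
    · -- computability
      have h1 : Computable fun p : ℕ => cntP validB (Nat.pair 2 p) :=
        (computable_cntP (α := ℕ) ((computable_validB.comp Computable.snd).to₂)
          ((Primrec₂.natPair.comp (Primrec.const 2) Primrec.id).to_comp)).of_eq fun p => rfl
      exact (Primrec.and.to_comp).comp computable_isPrB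
        (hf.comp ((Computable.ofNat ℚ).comp h1))
    · -- correctness
      intro p
      rw [Bool.and_eq_true, isPrB_iff]
      constructor
      · rintro ⟨hp, hfv⟩
        -- the decoded rational is (p : ℚ)⁻¹
        have hnum : ((p : ℚ))⁻¹.num = 1 := Rat.inv_natCast_num_of_pos hp.pos
        have hden : ((p : ℚ))⁻¹.den = p := Rat.inv_natCast_den_of_pos hp.pos
        have hE : Esig ((p : ℚ))⁻¹ = Nat.pair 2 p := by
          rw [Esig, hnum, hden]; rfl
        have hofNat : Denumerable.ofNat ℚ (cntP validB (Nat.pair 2 p)) = ((p : ℚ))⁻¹ := by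
          rw [← hE, ← encodeQ_eq]
          exact Denumerable.ofNat_encode _
        rw [hofNat, hfspec] at hfv
        rw [mem_closure_iff π hπ] at hfv
        have := hfv p hp
        rw [hden] at this
        exact this dvd_rfl
      · intro hp
        have hppr := hπ p hp
        refine ⟨hppr, ?_⟩
        have hnum : ((p : ℚ))⁻¹.num = 1 := Rat.inv_natCast_num_of_pos hppr.pos
        have hden : ((p : ℚ))⁻¹.den = p := Rat.inv_natCast_den_of_pos hppr.pos
        have hE : Esig ((p : ℚ))⁻¹ = Nat.pair 2 p := by
          rw [Esig, hnum, hden]; rfl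
        have hofNat : Denumerable.ofNat ℚ (cntP validB (Nat.pair 2 p)) = ((p : ℚ))⁻¹ := by
          rw [← hE, ← encodeQ_eq]
          exact Denumerable.ofNat_encode _
        rw [hofNat, hfspec]
        exact Subring.subset_closure ⟨p, hp, rfl⟩
  · rintro ⟨g, hg, hgspec⟩
    refine ⟨fun q => (cntP (fun r => isPrB r && (q.den % r == 0) && !(g r)) (q.den + 1) == 0),
      ?_, ?_⟩
    · -- computability
      have hinner : Computable₂ fun (q : ℚ) (r : ℕ) =>
          (isPrB r && (q.den % r == 0) && !(g r)) := by
        have h1 : Computable fun x : ℚ × ℕ => isPrB x.2 :=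
          computable_isPrB.comp Computable.snd
        have h2 : Computable fun x : ℚ × ℕ => (x.1.den % x.2 == 0) :=
          (Primrec.beq.to_comp).comp
            ((Primrec.nat_mod.to_comp).comp (computable_den.comp Computable.fst)
              Computable.snd) (Computable.const 0)
        have h3 : Computable fun x : ℚ × ℕ => !(g x.2) :=
          (Primrec.not.to_comp).comp (hg.comp Computable.snd)
        exact Computable₂.mk ((Primrec.and.to_comp).comp
          ((Primrec.and.to_comp).comp h1 h2) h3)
      exact ((Primrec.beq.to_comp).comp
        (computable_cntP hinner ((Primrec.succ.to_comp).comp computable_den))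
        (Computable.const 0)).of_eq fun q => rfl
    · -- correctness
      intro q
      rw [beq_iff_eq, cntP_eq_zero_iff, mem_closure_iff π hπ]
      constructor
      · intro h r hr hrd
        have hrle : r < q.den + 1 := Nat.lt_succ_of_le (Nat.le_of_dvd q.pos hrd)
        have := h r hrle
        rw [Bool.and_eq_false_iff, Bool.and_eq_false_iff] at this
        rcases this with (h1 | h1) | h1
        · exact absurd ((isPrB_iff r).2 hr) (by simp [h1])
        · rw [beq_eq_false_iff_ne] at h1
          exact absurd (Nat.mod_eq_zero_of_dvd hrd) h1
        · rw [Bool.not_eq_false'] at h1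
          exact (hgspec r).1 h1
      · intro h r _
        rw [Bool.and_eq_false_iff, Bool.and_eq_false_iff]
        by_cases hpr : r.Prime
        · by_cases hdvd : r ∣ q.den
          · right
            have := (hgspec r).2 (h r hpr hdvd)
            simp [this]
          · left; right
            rw [beq_eq_false_iff_ne]
            exact fun hc => hdvd (Nat.dvd_of_mod_eq_zero hc)
        · left; left
          rw [← Bool.not_eq_true, isPrB_iff]
          exact hpr
end

section
/- Let G be a subgroup of a group H such that H is locally ω-separated in G by retractions: for any finitely many nontrivial elements h₁, …, h_n ∈ H there is a homomorphism ψ : H → G that is the identity on G and with ψ(h_i) ≠ 1 for all i. Then G is existentially closed in H: any sentence of the form ∃x (⋀ᵢ uᵢ(x,g) = 1 ∧ ⋀ⱼ vⱼ(x,g) ≠ 1), with constants g from G, holds in H if and only if it holds in G. -/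
/-- Evaluation of a group word in variables `Fin n` and constants from the
subgroup `G` of `H`, at a tuple `x` of elements of `H`. -/
noncomputable def wordEval {H : Type} [Group H] (G : Subgroup H) {n : ℕ}
    (x : Fin n → H) : FreeGroup (Fin n ⊕ G) →* H :=
  FreeGroup.lift (Sum.elim x (fun g => (g : H)))

theorem wordEval_map {H : Type} [Group H] {G : Subgroup H} {n : ℕ} (ψ : H →* H)
    (hψ : ∀ g : G, ψ g = g) (x : Fin n → H) (w : FreeGroup (Fin n ⊕ G)) :
    wordEval G (ψ ∘ x) w = ψ (wordEval G x w) := by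
  suffices wordEval G (ψ ∘ x) = ψ.comp (wordEval G x) from DFunLike.congr_fun this w
  apply FreeGroup.ext_hom
  rintro (i | g)
  · simp [wordEval]
  · simp [wordEval, hψ g]

/-- If `H` is locally ω-separated in its subgroup `G` by retractions (every finite
set of nontrivial elements of `H` survives some retraction `H → G`), then `G` is
existentially closed in `H`: a system of equations `uᵢ = 1` and inequations
`vⱼ ≠ 1` with constants from `G` has a solution in `H` iff it has one in `G`. -/
theorem existentially_closed_of_separated (H : Type) [Group H] (G : Subgroup H)
    (hsep : ∀ (m : ℕ) (h : Fin m → H), (∀ i, h i ≠ 1) →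
      ∃ ψ : H →* H, (∀ g : G, ψ g = g) ∧ (∀ y : H, ψ y ∈ G) ∧ ∀ i, ψ (h i) ≠ 1)
    (n k l : ℕ) (u : Fin k → FreeGroup (Fin n ⊕ G)) (v : Fin l → FreeGroup (Fin n ⊕ G)) :
    ((∃ x : Fin n → H, (∀ i, wordEval G x (u i) = 1) ∧ ∀ j, wordEval G x (v j) ≠ 1) ↔
     (∃ x : Fin n → H, (∀ i, x i ∈ G) ∧
        (∀ i, wordEval G x (u i) = 1) ∧ ∀ j, wordEval G x (v j) ≠ 1)) := by
  refine ⟨fun ⟨x, hu, hv⟩ => ?_, fun ⟨x, _, hu, hv⟩ => ⟨x, hu, hv⟩⟩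
  obtain ⟨ψ, hfix, hmem, hne⟩ := hsep l (fun j => wordEval G x (v j)) hv
  refine ⟨ψ ∘ x, fun i => hmem (x i), fun i => ?_, fun j => ?_⟩
  · rw [wordEval_map ψ hfix, hu i, map_one]
  · rw [wordEval_map ψ hfix]
    exact hne j
end
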